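/- arXiv:1502.06841 — 3 statements merged into one kernel-verified Lean document; each statement's English description precedes it below -/
import Mathlib

section
/- Let H be a real Hilbert space, A : H → H a bounded self-adjoint linear operator, and Φ : H → ℝ the quadratic form Φ(u) = (1/2)⟨Au,u⟩. Then the following are equivalent: (i) 0 is not an accumulation point of the spectrum of A; (ii) there exists ρ > 0 such that ‖Au‖ ≥ ρ·‖u‖ for all u in the orthogonal complement of ker(A); (iii) Φ satisfies a Łojasiewicz gradient inequality at the origin for some exponent θ ∈ (0,1/2], i.e. there exist c, σ > 0 with ‖Au‖ ≥ c·|Φ(u)|^{1−θ} for all ‖u‖ < σ; (iv) Φ satisfies the Łojasiewicz gradient inequality at every point with exponent θ = 1/2, i.e. for every a ∈ H there exist c, σ > 0 with ‖Au‖ ≥ c·|Φ(u) − Φ(a)|^{1/2} for all ‖u − a‖ < σ. -/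
open Set Filter
open scoped RealInnerProductSpace

set_option linter.unusedSectionVars false

section Aux
variable {H : Type*} [NormedAddCommGroup H] [InnerProductSpace ℝ H] [CompleteSpace H]

/-- A symmetric operator bounded below is invertible. -/
lemma sa_isUnit (T : H →L[ℝ] H) (hT : ∀ x y : H, ⟪T x, y⟫ = ⟪x, T y⟫)
    {c : ℝ} (hc : 0 < c) (hb : ∀ u, c * ‖u‖ ≤ ‖T u‖) : IsUnit T := by
  rw [ContinuousLinearMap.isUnit_iff_bijective]
  have hker : ∀ u : H, T u = 0 → u = 0 := by
    intro u hu
    have h1 := hb u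
    rw [hu, norm_zero] at h1
    have : ‖u‖ ≤ 0 := by nlinarith [norm_nonneg u]
    simpa [norm_le_zero_iff] using this
  have hinj : Function.Injective T := by
    intro x y hxy
    have := hker (x - y) (by rw [map_sub, hxy, sub_self])
    rwa [sub_eq_zero] at this
  refine ⟨hinj, ?_⟩
  have hanti : AntilipschitzWith ⟨c⁻¹, by positivity⟩ T :=
    T.antilipschitz_of_bound fun x => by
      have h1 := hb x
      have h2 : c * ‖x‖ * c⁻¹ ≤ ‖T x‖ * c⁻¹ := by
        apply mul_le_mul_of_nonneg_right h1 (by positivity)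
      push_cast
      calc ‖x‖ = c * ‖x‖ * c⁻¹ := by field_simp
        _ ≤ ‖T x‖ * c⁻¹ := h2
        _ = c⁻¹ * ‖T x‖ := by ring
  have hclosed : IsClosed (LinearMap.range (T : H →ₗ[ℝ] H) : Set H) := by
    have h := hanti.isClosed_range T.uniformContinuous
    convert h using 1
    exact LinearMap.coe_range _
  haveI : CompleteSpace (LinearMap.range (T : H →ₗ[ℝ] H)) := hclosed.completeSpace_coe
  have horth : (LinearMap.range (T : H →ₗ[ℝ] H))ᗮ = ⊥ := by
    rw [Submodule.eq_bot_iff]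
    intro v hv
    rw [Submodule.mem_orthogonal] at hv
    have h3 : ⟪T (T v), v⟫ = 0 := hv (T (T v)) ⟨T v, rfl⟩
    rw [hT (T v) v] at h3
    exact hker v (inner_self_eq_zero.mp h3)
  have hrange : LinearMap.range (T : H →ₗ[ℝ] H) = ⊤ := Submodule.orthogonal_eq_bot_iff.mp horth
  exact LinearMap.range_eq_top.mp hrange

lemma sa_cs (C : H →L[ℝ] H) (hC : ∀ x y : H, ⟪C x, y⟫ = ⟪x, C y⟫)
    (hpos : ∀ v, 0 ≤ ⟪C v, v⟫) (x y : H) :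
    ⟪C x, y⟫ ^ 2 ≤ ⟪C x, x⟫ * ⟪C y, y⟫ := by
  have key : ∀ t : ℝ, 0 ≤ ⟪C y, y⟫ * (t * t) + (2 * ⟪C x, y⟫) * t + ⟪C x, x⟫ := by
    intro t
    have h1 := hpos (x + t • y)
    have h2 : ⟪C (x + t • y), x + t • y⟫ =
        ⟪C y, y⟫ * (t * t) + (2 * ⟪C x, y⟫) * t + ⟪C x, x⟫ := by
      rw [map_add, map_smul, inner_add_left, inner_add_right, inner_add_right,
        inner_smul_left, inner_smul_right, inner_smul_left, inner_smul_right]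
      have h3 : ⟪C y, x⟫ = ⟪C x, y⟫ := by rw [hC y x, real_inner_comm]
      rw [h3]; simp only [starRingEnd_apply, star_trivial]; ring
    linarith [h2 ▸ h1]
  have hd := discrim_le_zero key
  rw [discrim] at hd
  nlinarith

/-- If the quadratic form of a symmetric operator takes a negative value,
there is a negative spectral value. -/
lemma sa_spec_neg (B : H →L[ℝ] H) (hB : ∀ x y : H, ⟪B x, y⟫ = ⟪x, B y⟫)
    {u : H} (hu : ⟪B u, u⟫ < 0) : ∃ μ < 0, μ ∈ spectrum ℝ B := by
  have hu0 : u ≠ 0 := by rintro rfl; simp at hu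
  have hnu : (0:ℝ) < ‖u‖ := norm_pos_iff.mpr hu0
  set u' : H := ‖u‖⁻¹ • u with hu'def
  have hu'norm : ‖u'‖ = 1 := by
    rw [hu'def, norm_smul]; simp [abs_of_pos (inv_pos.mpr hnu), inv_mul_cancel₀ hnu.ne']
  have hformu' : ⟪B u', u'⟫ < 0 := by
    rw [hu'def, map_smul, inner_smul_left, inner_smul_right]
    simp only [RCLike.ofReal_real_eq_id, id_eq, starRingEnd_apply, star_trivial]
    have : (0:ℝ) < ‖u‖⁻¹ * ‖u‖⁻¹ := by positivity
    nlinarith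
  set S : Set ℝ := (fun v => ⟪B v, v⟫) '' {v : H | ‖v‖ = 1} with hSdef
  have hSne : S.Nonempty := ⟨⟪B u', u'⟫, u', hu'norm, rfl⟩
  have hSbdd : BddBelow S := by
    refine ⟨-‖B‖, ?_⟩
    rintro r ⟨v, hv, rfl⟩
    have h1 : |⟪B v, v⟫| ≤ ‖B v‖ * ‖v‖ := abs_real_inner_le_norm _ _
    have h2 : ‖B v‖ ≤ ‖B‖ * ‖v‖ := B.le_opNorm v
    rw [Set.mem_setOf_eq] at hv
    rw [hv] at h1 h2
    simp only [mul_one] at h1 h2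
    have := abs_le.mp (h1.trans h2)
    linarith [this.1]
  set m : ℝ := sInf S with hmdef
  have hmle : m ≤ ⟪B u', u'⟫ := csInf_le hSbdd ⟨u', hu'norm, rfl⟩
  have hmneg : m < 0 := lt_of_le_of_lt hmle hformu'
  refine ⟨m, hmneg, ?_⟩
  by_contra hspec
  have hunit : IsUnit ((B - m • 1 : H →L[ℝ] H)) := by
    have h := spectrum.notMem_iff.mp hspec
    have heq : (B - m • 1 : H →L[ℝ] H) = -(algebraMap ℝ (H →L[ℝ] H) m - B) := by
      rw [Algebra.algebraMap_eq_smul_one]; abel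
    rw [heq]; exact h.neg
  set C : H →L[ℝ] H := B - m • 1 with hCdef
  have hCapp : ∀ v, C v = B v - m • v := by
    intro v; simp [hCdef, ContinuousLinearMap.sub_apply, ContinuousLinearMap.smul_apply,
      ContinuousLinearMap.one_apply]
  have hCsym : ∀ x y : H, ⟪C x, y⟫ = ⟪x, C y⟫ := by
    intro x y
    rw [hCapp, hCapp, inner_sub_left, inner_sub_right, hB,
      real_inner_smul_left, real_inner_smul_right]
  have hCform : ∀ v, ⟪C v, v⟫ = ⟪B v, v⟫ - m * ‖v‖ ^ 2 := by
    intro v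
    rw [hCapp, inner_sub_left, real_inner_smul_left, real_inner_self_eq_norm_sq]
  have hCpos : ∀ v, 0 ≤ ⟪C v, v⟫ := by
    intro v
    rcases eq_or_ne v 0 with rfl | hv
    · simp
    · have hnv : (0:ℝ) < ‖v‖ := norm_pos_iff.mpr hv
      set w : H := ‖v‖⁻¹ • v with hwdef
      have hwn : ‖w‖ = 1 := by
        rw [hwdef, norm_smul]; simp [abs_of_pos (inv_pos.mpr hnv), inv_mul_cancel₀ hnv.ne']
      have h1 : m ≤ ⟪B w, w⟫ := csInf_le hSbdd ⟨w, hwn, rfl⟩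
      have h2 : ⟪B w, w⟫ = (‖v‖⁻¹ * ‖v‖⁻¹) * ⟪B v, v⟫ := by
        rw [hwdef, map_smul, inner_smul_left, inner_smul_right]
        simp only [RCLike.ofReal_real_eq_id, id_eq, starRingEnd_apply, star_trivial]
        ring
      rw [hCform]
      rw [h2] at h1
      have h3 : ‖v‖⁻¹ * ‖v‖⁻¹ = (‖v‖^2)⁻¹ := by rw [pow_two, mul_inv]
      rw [h3] at h1
      have h4 : (0:ℝ) < ‖v‖^2 := by positivity
      have h5 : m * ‖v‖^2 ≤ ⟪B v, v⟫ := by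
        have h6 := mul_le_mul_of_nonneg_right h1 (le_of_lt h4)
        rwa [mul_comm ((‖v‖^2)⁻¹) _, mul_assoc, inv_mul_cancel₀ (ne_of_gt h4), mul_one] at h6
      linarith
  -- C is invertible, get lower bound
  obtain ⟨Cu, hCu⟩ := hunit
  set D : H →L[ℝ] H := ↑Cu⁻¹ with hDdef
  have hDC : ∀ w, D (C w) = w := by
    intro w
    have : (D * C) w = w := by
      rw [hDdef, ← hCu, Units.inv_mul]; simp
    simpa [ContinuousLinearMap.mul_apply] using this
  have hlow : ∀ w : H, ‖w‖ ≤ ‖D‖ * ‖C w‖ := by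
    intro w
    conv_lhs => rw [← hDC w]
    exact D.le_opNorm (C w)
  have hDpos : (0:ℝ) < ‖D‖ := by
    rcases le_or_gt ‖D‖ 0 with h | h
    · exfalso
      have := hlow u'
      have hC1 : ‖D‖ * ‖C u'‖ ≤ 0 := mul_nonpos_of_nonpos_of_nonneg h (norm_nonneg _)
      rw [hu'norm] at this
      linarith
    · exact h
  have hCnorm : (0:ℝ) < ‖C‖ := by
    have h1 := hlow u'
    rw [hu'norm] at h1
    have h2 : ‖C u'‖ ≤ ‖C‖ * ‖u'‖ := C.le_opNorm u'
    rw [hu'norm, mul_one] at h2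
    nlinarith [norm_nonneg (C u')]
  -- key: for unit v, form of B at v is ≥ m + δ
  set δ : ℝ := (‖D‖^2 * ‖C‖)⁻¹ with hδdef
  have hδpos : (0:ℝ) < δ := by rw [hδdef]; positivity
  have hkey : ∀ v : H, ‖v‖ = 1 → m + δ ≤ ⟪B v, v⟫ := by
    intro v hv
    have hcs := sa_cs C hCsym hCpos v (C v)
    have h1 : ⟪C v, C v⟫ = ‖C v‖ ^ 2 := real_inner_self_eq_norm_sq _
    have h2 : ⟪C (C v), C v⟫ ≤ ‖C‖ * ‖C v‖ ^ 2 := by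
      calc ⟪C (C v), C v⟫ ≤ ‖C (C v)‖ * ‖C v‖ := real_inner_le_norm _ _
        _ ≤ (‖C‖ * ‖C v‖) * ‖C v‖ := by
            apply mul_le_mul_of_nonneg_right (C.le_opNorm _) (norm_nonneg _)
        _ = ‖C‖ * ‖C v‖ ^ 2 := by ring
    have h3 : (1:ℝ) ≤ ‖D‖ * ‖C v‖ := by have := hlow v; rwa [hv] at this
    have h4 : (0:ℝ) < ‖C v‖ := by
      rcases le_or_gt ‖C v‖ 0 with h | h
      · exfalso; nlinarith
      · exact h
    -- ‖C v‖^4 ≤ ⟪C v, v⟫ * ‖C‖ * ‖C v‖^2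
    have h5 : ‖C v‖ ^ 4 ≤ ⟪C v, v⟫ * (‖C‖ * ‖C v‖ ^ 2) := by
      have := hcs
      rw [h1] at this
      have hvv : ⟪C v, v⟫ * ⟪C (C v), C v⟫ ≤ ⟪C v, v⟫ * (‖C‖ * ‖C v‖ ^ 2) :=
        mul_le_mul_of_nonneg_left h2 (hCpos v)
      nlinarith [this]
    have h6 : ‖C v‖ ^ 2 ≤ ⟪C v, v⟫ * ‖C‖ := by
      have h5' : ‖C v‖^2 * ‖C v‖^2 ≤ (⟪C v, v⟫ * ‖C‖) * ‖C v‖^2 := by nlinarith [h5]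
      exact le_of_mul_le_mul_right h5' (by positivity)
    have h7 : ‖D‖⁻¹ ≤ ‖C v‖ := by
      rw [inv_le_iff_one_le_mul₀' hDpos]; exact h3
    have h8 : (‖D‖^2)⁻¹ ≤ ‖C v‖ ^ 2 := by
      rw [← inv_pow]
      exact pow_le_pow_left₀ (by positivity) h7 2
    have h9 : (‖D‖^2)⁻¹ ≤ ⟪C v, v⟫ * ‖C‖ := le_trans h8 h6
    have h10 : δ ≤ ⟪C v, v⟫ := by
      rw [hδdef, mul_inv]
      have h9' := mul_le_mul_of_nonneg_right h9 (le_of_lt (inv_pos.mpr hCnorm))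
      rwa [mul_assoc, mul_inv_cancel₀ (ne_of_gt hCnorm), mul_one] at h9'
    have h11 := hCform v
    rw [hv] at h11
    simp only [one_pow, mul_one] at h11
    linarith
  have : m + δ ≤ m := by
    apply le_csInf hSne
    rintro r ⟨v, hv, rfl⟩
    exact hkey v hv
  linarith

lemma sa_approx (T : H →L[ℝ] H) (hT : ∀ x y : H, ⟪T x, y⟫ = ⟪x, T y⟫)
    {lam : ℝ} (hlam : lam ∈ spectrum ℝ T) {c : ℝ} (hc : 0 < c) :
    ∃ u : H, ‖u‖ = 1 ∧ ‖T u - lam • u‖ < c := by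
  by_contra hcon
  push_neg at hcon
  set S : H →L[ℝ] H := T - lam • 1 with hS
  have hSapp : ∀ v, S v = T v - lam • v := by
    intro v
    simp [hS, ContinuousLinearMap.sub_apply, ContinuousLinearMap.smul_apply,
      ContinuousLinearMap.one_apply]
  have hSsym : ∀ x y : H, ⟪S x, y⟫ = ⟪x, S y⟫ := by
    intro x y
    rw [hSapp, hSapp, inner_sub_left, inner_sub_right, hT,
      real_inner_smul_left, real_inner_smul_right]
  have hb : ∀ v, c * ‖v‖ ≤ ‖S v‖ := by
    intro v
    rcases eq_or_ne v 0 with rfl | hv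
    · simp
    · have hnv : (0:ℝ) < ‖v‖ := norm_pos_iff.mpr hv
      have h1 := hcon (‖v‖⁻¹ • v) (by rw [norm_smul]; simp [abs_of_pos (inv_pos.mpr hnv),
        inv_mul_cancel₀ hnv.ne'])
      have h2 : T (‖v‖⁻¹ • v) - lam • (‖v‖⁻¹ • v) = ‖v‖⁻¹ • (T v - lam • v) := by
        rw [map_smul, smul_sub, smul_comm]
      rw [h2, norm_smul] at h1
      have h3 : c ≤ ‖v‖⁻¹ * ‖T v - lam • v‖ := by
        simpa [abs_of_pos (inv_pos.mpr hnv)] using h1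
      rw [← hSapp] at h3
      calc c * ‖v‖ ≤ (‖v‖⁻¹ * ‖S v‖) * ‖v‖ := by nlinarith
        _ = ‖S v‖ := by field_simp
  have hunit : IsUnit S := sa_isUnit S hSsym hc hb
  have : IsUnit (algebraMap ℝ (H →L[ℝ] H) lam - T) := by
    have : algebraMap ℝ (H →L[ℝ] H) lam - T = -S := by
      rw [hS, Algebra.algebraMap_eq_smul_one]; abel
    rw [this]
    exact hunit.neg
  exact (spectrum.notMem_iff.mpr this) hlam

-- operator identities
lemma opid1 (T : H →L[ℝ] H) (r : ℝ) :
    (T - r • 1) * (T + r • 1) = T * T - (r * r) • 1 := by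
  ext v
  simp only [ContinuousLinearMap.mul_apply, ContinuousLinearMap.sub_apply,
    ContinuousLinearMap.add_apply, ContinuousLinearMap.smul_apply,
    ContinuousLinearMap.one_apply, map_add, map_smul]
  module

lemma opid2 (U : H →L[ℝ] H) (s t : ℝ) :
    (U - s • 1) * (U - t • 1) = U * U - (s + t) • U + (s * t) • 1 := by
  ext v
  simp only [ContinuousLinearMap.mul_apply, ContinuousLinearMap.sub_apply,
    ContinuousLinearMap.add_apply, ContinuousLinearMap.smul_apply,
    ContinuousLinearMap.one_apply, map_add, map_smul, map_sub]
  module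

lemma opid3 (T : H →L[ℝ] H) (a b : ℝ) :
    (T * T + a • T + b • 1) * (T * T - a • T + b • 1)
      = (T * T) * (T * T) + (2 * b - a * a) • (T * T) + (b * b) • 1 := by
  ext v
  simp only [ContinuousLinearMap.mul_apply, ContinuousLinearMap.sub_apply,
    ContinuousLinearMap.add_apply, ContinuousLinearMap.smul_apply,
    ContinuousLinearMap.one_apply, map_add, map_smul, map_sub]
  module

set_option maxHeartbeats 1000000 in
lemma spec_gap_bound (A : H →L[ℝ] H) (hA : ∀ x y : H, ⟪A x, y⟫ = ⟪x, A y⟫)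
    {ε : ℝ} (hε : 0 < ε) (hspec : ∀ lam ∈ spectrum ℝ A, |lam| < ε → lam = 0) :
    ∀ u ∈ (LinearMap.ker (A : H →ₗ[ℝ] H))ᗮ, ε * ‖u‖ ≤ ‖A u‖ := by
  set P : H →L[ℝ] H := A * A with hPdef
  have hPapp : ∀ v, P v = A (A v) := fun v => rfl
  have hPsym : ∀ x y : H, ⟪P x, y⟫ = ⟪x, P y⟫ := by
    intro x y; rw [hPapp, hPapp, hA (A x) y, hA x (A y)]
  -- units from spectral gap
  have hnot : ∀ r : ℝ, r ≠ 0 → |r| < ε → IsUnit (A - r • 1) := by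
    intro r hr0 habs
    have hr : r ∉ spectrum ℝ A := fun h => hr0 (hspec r h habs)
    have h1 := spectrum.notMem_iff.mp hr
    have heq : A - r • 1 = -(algebraMap ℝ (H →L[ℝ] H) r - A) := by
      rw [Algebra.algebraMap_eq_smul_one]; abel
    rw [heq]; exact h1.neg
  -- the quadratic form of Q := P*P - ε²•P is nonnegative
  have hQform : ∀ v : H, 0 ≤ ⟪(P * P - (ε ^ 2) • P) v, v⟫ := by
    set Q : H →L[ℝ] H := P * P - (ε ^ 2) • P with hQdef
    have hQapp : ∀ v, Q v = P (P v) - (ε ^ 2) • P v := fun v => rfl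
    have hQsym : ∀ x y : H, ⟪Q x, y⟫ = ⟪x, Q y⟫ := by
      intro x y
      rw [hQapp, hQapp, inner_sub_left, inner_sub_right, real_inner_smul_left,
        real_inner_smul_right, hPsym (P x) y, hPsym x (P y), hPsym x y]
    by_contra hcon
    push_neg at hcon
    obtain ⟨u, hu⟩ := hcon
    obtain ⟨μ, hμneg, hμspec⟩ := sa_spec_neg Q hQsym hu
    have hnotunit : ¬ IsUnit (algebraMap ℝ (H →L[ℝ] H) μ - Q) := by
      intro h; exact (spectrum.notMem_iff.mpr h) hμspec
    apply hnotunit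
    have key : IsUnit (Q - μ • 1) := by
      rcases le_or_gt 0 (ε ^ 4 + 4 * μ) with hcase | hcase
      · -- real roots case
        set g : ℝ := Real.sqrt (ε ^ 4 + 4 * μ) with hgdef
        have hg2 : g ^ 2 = ε ^ 4 + 4 * μ := Real.sq_sqrt hcase
        have hgnn : 0 ≤ g := Real.sqrt_nonneg _
        have hglt : g < ε ^ 2 := by nlinarith
        set sp : ℝ := (ε ^ 2 + g) / 2 with hspdef
        set sm : ℝ := (ε ^ 2 - g) / 2 with hsmdef
        have hsum : sp + sm = ε ^ 2 := by rw [hspdef, hsmdef]; ring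
        have hprod : sp * sm = -μ := by
          rw [hspdef, hsmdef]; linear_combination (-(1:ℝ)/4) * hg2
        have hsmpos : 0 < sm := by rw [hsmdef]; linarith
        have hsppos : 0 < sp := by rw [hspdef]; nlinarith
        have hsplt : sp < ε ^ 2 := by rw [hspdef]; nlinarith
        have hsmlt : sm < ε ^ 2 := by rw [hsmdef]; nlinarith
        -- unit for each factor P - s•1 with 0 < s < ε²
        have hfac : ∀ s : ℝ, 0 < s → s < ε ^ 2 → IsUnit (P - s • 1) := by
          intro s hs0 hslt
          set r : ℝ := Real.sqrt s with hrdef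
          have hr2 : r * r = s := Real.mul_self_sqrt hs0.le
          have hr0 : 0 < r := Real.sqrt_pos.mpr hs0
          have hrlt : r < ε := by nlinarith
          have h1 : IsUnit (A - r • 1) := hnot r hr0.ne' (by rw [abs_of_pos hr0]; exact hrlt)
          have h2 : IsUnit (A + r • 1) := by
            have := hnot (-r) (by simp [hr0.ne']) (by rw [abs_neg, abs_of_pos hr0]; exact hrlt)
            simpa [neg_smul, sub_neg_eq_add] using this
          have h3 := h1.mul h2
          rwa [opid1, hr2, ← hPdef] at h3
        have hQfac : Q - μ • 1 = (P - sp • 1) * (P - sm • 1) := by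
          rw [opid2, hsum, hprod, hQdef, neg_smul]
          abel
        rw [hQfac]
        exact (hfac sp hsppos hsplt).mul (hfac sm hsmpos hsmlt)
      · -- complex roots case
        set b : ℝ := Real.sqrt (-μ) with hbdef
        have hb2 : b ^ 2 = -μ := Real.sq_sqrt (by linarith)
        have hbpos : 0 < b := Real.sqrt_pos.mpr (by linarith)
        have hbgt : ε ^ 2 / 2 < b := by nlinarith
        set a : ℝ := Real.sqrt (2 * b + ε ^ 2) with hadef
        have ha2 : a ^ 2 = 2 * b + ε ^ 2 := Real.sq_sqrt (by positivity)
        set d : ℝ := (2 * b - ε ^ 2) / 4 with hddef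
        have hdpos : 0 < d := by rw [hddef]; linarith
        -- bound below for q = P + e•A + b•1 with e = ±a
        have hbound : ∀ e : ℝ, e ^ 2 = a ^ 2 → ∀ v : H,
            d * ‖v‖ ≤ ‖(P + e • A + b • 1) v‖ := by
          intro e he v
          have happ : (P + e • A + b • 1) v = A (A v) + e • A v + b • v := rfl
          have hform : ⟪(P + e • A + b • 1) v, v⟫
              = ‖A v + (e / 2) • v‖ ^ 2 + d * ‖v‖ ^ 2 := by
            rw [happ, inner_add_left, inner_add_left, real_inner_smul_left,
              real_inner_smul_left, hA (A v) v]
            rw [@norm_add_sq_real]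
            rw [real_inner_smul_right, norm_smul]
            have h1 : ⟪A v, A v⟫ = ‖A v‖ ^ 2 := real_inner_self_eq_norm_sq _
            have h2 : ⟪v, v⟫ = ‖v‖ ^ 2 := real_inner_self_eq_norm_sq _
            have h3 : (‖(e/2 : ℝ)‖ * ‖v‖) ^ 2 = e ^ 2 / 4 * ‖v‖ ^ 2 := by
              rw [mul_pow, Real.norm_eq_abs, sq_abs]; ring
            rw [h1, h2, h3, hddef]
            have he2 : e ^ 2 = 2 * b + ε ^ 2 := by rw [he, ha2]
            linear_combination (-(‖v‖ ^ 2) / 4) * he2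
          rcases eq_or_ne v 0 with rfl | hv
          · simp
          · have hnv : (0:ℝ) < ‖v‖ := norm_pos_iff.mpr hv
            have h4 : d * ‖v‖ ^ 2 ≤ ⟪(P + e • A + b • 1) v, v⟫ := by
              rw [hform]; nlinarith [sq_nonneg ‖A v + (e / 2) • v‖]
            have h5 : ⟪(P + e • A + b • 1) v, v⟫ ≤ ‖(P + e • A + b • 1) v‖ * ‖v‖ :=
              real_inner_le_norm _ _
            nlinarith
        have hsym : ∀ e : ℝ, ∀ x y : H,
            ⟪(P + e • A + b • 1) x, y⟫ = ⟪x, (P + e • A + b • 1) y⟫ := by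
          intro e x y
          have h1 : ∀ w : H, (P + e • A + b • 1) w = P w + e • A w + b • w := fun w => rfl
          rw [h1, h1, inner_add_left, inner_add_left, inner_add_right, inner_add_right,
            real_inner_smul_left, real_inner_smul_left, real_inner_smul_right,
            real_inner_smul_right, hPsym, hA]
        have hu1 : IsUnit (P + a • A + b • 1) :=
          sa_isUnit _ (hsym a) hdpos (hbound a rfl)
        have hu2 : IsUnit (P + (-a) • A + b • 1) :=
          sa_isUnit _ (hsym (-a)) hdpos (hbound (-a) (by ring))
        have h3 := hu1.mul hu2
        have heq2 : (P + a • A + b • 1) * (P + (-a) • A + b • 1) = Q - μ • 1 := by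
          have : P + (-a) • A + b • 1 = P - a • A + b • 1 := by rw [neg_smul]; abel
          rw [this, hPdef, opid3, hQdef]
          have h2b : 2 * b - a * a = -ε ^ 2 := by linear_combination (-1 : ℝ) * ha2
          have hbb : b * b = -μ := by linear_combination hb2
          rw [h2b, hbb, neg_smul, neg_smul]
          abel
        rwa [heq2] at h3
    have heq3 : algebraMap ℝ (H →L[ℝ] H) μ - Q = -(Q - μ • 1) := by
      rw [Algebra.algebraMap_eq_smul_one]; abel
    rw [heq3]
    exact key.neg
  -- deduce ε‖Av‖ ≤ ‖A(Av)‖ for all v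
  have hAA : ∀ v : H, ε * ‖A v‖ ≤ ‖A (A v)‖ := by
    intro v
    have h1 := hQform v
    have h2 : (P * P - (ε ^ 2) • P) v = P (P v) - (ε ^ 2) • P v := rfl
    rw [h2, inner_sub_left, real_inner_smul_left] at h1
    have h3 : ⟪P (P v), v⟫ = ‖P v‖ ^ 2 := by
      rw [hPsym (P v) v, real_inner_self_eq_norm_sq]
    have h4 : ⟪P v, v⟫ = ‖A v‖ ^ 2 := by
      rw [hPapp, hA (A v) v, real_inner_self_eq_norm_sq]
    rw [h3, h4] at h1
    have h5 : ε ^ 2 * ‖A v‖ ^ 2 ≤ ‖P v‖ ^ 2 := by linarith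
    rw [hPapp] at h5
    nlinarith [norm_nonneg (A (A v)), norm_nonneg (A v), mul_nonneg hε.le (norm_nonneg (A v))]
  -- pass to the closure of the range
  intro u hu
  have hkerorth : LinearMap.ker (A : H →ₗ[ℝ] H) = (LinearMap.range (A : H →ₗ[ℝ] H))ᗮ := by
    ext v
    rw [Submodule.mem_orthogonal, LinearMap.mem_ker]
    constructor
    · rintro hv u' ⟨w, rfl⟩
      rw [ContinuousLinearMap.coe_coe] at hv ⊢
      rw [hA w v, hv, inner_zero_right]
    · intro hv
      have h1 := hv (A (A v)) ⟨A v, rfl⟩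
      rw [hA (A v) v] at h1
      exact inner_self_eq_zero.mp h1
  have hclos : (LinearMap.ker (A : H →ₗ[ℝ] H))ᗮ = (LinearMap.range (A : H →ₗ[ℝ] H)).topologicalClosure := by
    rw [hkerorth, Submodule.orthogonal_orthogonal_eq_closure]
  rw [hclos] at hu
  have humem : u ∈ closure ((LinearMap.range (A : H →ₗ[ℝ] H) : Submodule ℝ H) : Set H) := hu
  have hclosedset : IsClosed {x : H | ε * ‖x‖ ≤ ‖A x‖} :=
    isClosed_le (continuous_const.mul continuous_norm) (A.continuous.norm)
  have hsub : ((LinearMap.range (A : H →ₗ[ℝ] H) : Submodule ℝ H) : Set H) ⊆ {x : H | ε * ‖x‖ ≤ ‖A x‖} := by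
    rintro x ⟨w, rfl⟩
    exact hAA w
  exact closure_minimal hsub hclosedset humem

-- implication (1) → (2)
lemma imp12 (A : H →L[ℝ] H) (hA : ∀ x y : H, ⟪A x, y⟫ = ⟪x, A y⟫)
    (h1 : ¬ AccPt (0:ℝ) (Filter.principal (spectrum ℝ A))) :
    ∃ ρ > (0:ℝ), ∀ u ∈ (LinearMap.ker (A : H →ₗ[ℝ] H))ᗮ, ρ * ‖u‖ ≤ ‖A u‖ := by
  rw [accPt_iff_nhds] at h1
  push_neg at h1
  obtain ⟨U, hU, hU0⟩ := h1
  obtain ⟨ε, hε, hball⟩ := Metric.mem_nhds_iff.mp hU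
  refine ⟨ε, hε, spec_gap_bound A hA hε ?_⟩
  intro lam hlam habs
  exact hU0 lam ⟨hball (by simpa [Real.dist_eq] using habs), hlam⟩

-- implication (3) → (1)
lemma imp31 (A : H →L[ℝ] H) (hA : ∀ x y : H, ⟪A x, y⟫ = ⟪x, A y⟫)
    (h3 : ∃ θ ∈ Set.Ioc (0:ℝ) (1/2), ∃ c > (0:ℝ), ∃ σ > (0:ℝ),
      ∀ u : H, ‖u‖ < σ → c * |(1/2 : ℝ) * ⟪A u, u⟫| ^ (1 - θ) ≤ ‖A u‖) :
    ¬ AccPt (0:ℝ) (Filter.principal (spectrum ℝ A)) := by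
  obtain ⟨θ, ⟨hθ0, hθ2⟩, c, hc, σ, hσ, hh⟩ := h3
  set t : ℝ := σ / 2 with htdef
  have ht : 0 < t := by positivity
  have h1θ : 0 < 1 - θ := by linarith
  set C₁ : ℝ := c * (t ^ 2 / 4) ^ (1 - θ) with hC₁def
  have hC₁ : 0 < C₁ := by
    have := Real.rpow_pos_of_pos (show (0:ℝ) < t ^ 2 / 4 by positivity) (1 - θ)
    positivity
  set ε₁ : ℝ := (C₁ / (2 * t)) ^ (1 / θ) with hε₁def
  have hε₁ : 0 < ε₁ := Real.rpow_pos_of_pos (by positivity) _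
  set ε : ℝ := min 1 ε₁ with hεdef
  have hεpos : 0 < ε := lt_min one_pos hε₁
  have key : ∀ lam ∈ spectrum ℝ A, |lam| < ε → lam = 0 := by
    intro lam hlam habs
    by_contra hne
    have ha : 0 < |lam| := abs_pos.mpr hne
    set a : ℝ := |lam| with hadef
    have ha1 : a ≤ 1 := le_of_lt (lt_of_lt_of_le habs (min_le_left _ _))
    -- approximate eigenvector
    obtain ⟨u, hu1, hu2⟩ := sa_approx A hA hlam (show (0:ℝ) < a / 2 by positivity)
    set v : H := t • u with hvdef
    have hvnorm : ‖v‖ < σ := by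
      rw [hvdef, norm_smul, hu1, Real.norm_eq_abs, abs_of_pos ht, mul_one, htdef]
      linarith
    have hAv : ‖A v‖ ≤ 2 * t * a := by
      have h1 : ‖A u‖ ≤ ‖lam • u‖ + ‖A u - lam • u‖ :=
        norm_le_norm_add_norm_sub' (A u) (lam • u)
      have h2 : ‖lam • u‖ = a := by rw [norm_smul, hu1, Real.norm_eq_abs, mul_one]
      have h3 : ‖A u‖ ≤ 3 / 2 * a := by
        rw [h2] at h1; linarith [hu2]
      have h4 : A v = t • A u := by rw [hvdef, map_smul]
      rw [h4, norm_smul, Real.norm_eq_abs, abs_of_pos ht]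
      nlinarith
    have hinner : a / 2 ≤ |⟪A u, u⟫| := by
      have h1 : ⟪A u, u⟫ = lam * (1:ℝ) + ⟪A u - lam • u, u⟫ := by
        rw [inner_sub_left, real_inner_smul_left]
        have : ⟪u, u⟫ = (1:ℝ) := by
          rw [real_inner_self_eq_norm_sq, hu1]; norm_num
        rw [this]; ring
      have h2 : |⟪A u - lam • u, u⟫| ≤ a / 2 := by
        calc |⟪A u - lam • u, u⟫| ≤ ‖A u - lam • u‖ * ‖u‖ := abs_real_inner_le_norm _ _
          _ ≤ a / 2 := by rw [hu1, mul_one]; linarith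
      rw [h1]
      have := abs_sub_abs_le_abs_sub (lam * 1 + ⟪A u - lam • u, u⟫) (⟪A u - lam • u, u⟫)
      simp only [add_sub_cancel_right] at this
      have h5 : |lam * 1| = a := by rw [mul_one]
      calc a / 2 = a - a / 2 := by ring
        _ ≤ |lam * 1 + ⟪A u - lam • u, u⟫| := by
            have := abs_add_le (lam * 1) (⟪A u - lam • u, u⟫)
            have h6 := abs_sub_abs_le_abs_sub (lam * 1) (-(⟪A u - lam • u, u⟫))
            rw [sub_neg_eq_add, abs_neg, h5] at h6
            linarith
    have hform : t ^ 2 / 4 * a ≤ |(1/2 : ℝ) * ⟪A v, v⟫| := by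
      have h1 : ⟪A v, v⟫ = t ^ 2 * ⟪A u, u⟫ := by
        rw [hvdef, map_smul, inner_smul_left, inner_smul_right]
        simp only [starRingEnd_apply, star_trivial]
        ring
      rw [h1, abs_mul, abs_mul]
      have h2 : |(1/2 : ℝ)| = 1/2 := by norm_num
      have h3 : |t ^ 2| = t ^ 2 := abs_of_pos (by positivity)
      rw [h2, h3]
      nlinarith [hinner]
    -- main chain
    have hchain : C₁ * a ^ (1 - θ) ≤ 2 * t * a := by
      have h1 : c * (t ^ 2 / 4 * a) ^ (1 - θ) ≤ c * |(1/2 : ℝ) * ⟪A v, v⟫| ^ (1 - θ) := by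
        apply mul_le_mul_of_nonneg_left _ hc.le
        exact Real.rpow_le_rpow (by positivity) hform h1θ.le
      have h2 : (t ^ 2 / 4 * a) ^ (1 - θ) = (t ^ 2 / 4) ^ (1 - θ) * a ^ (1 - θ) :=
        Real.mul_rpow (by positivity) ha.le
      have h3 := hh v hvnorm
      rw [hC₁def, mul_assoc, ← h2]
      exact le_trans h1 (le_trans h3 hAv)
    have hane : a ^ (1 - θ) > 0 := Real.rpow_pos_of_pos ha _
    have hsplit : a = a ^ (1 - θ) * a ^ θ := by
      rw [← Real.rpow_add ha, sub_add_cancel, Real.rpow_one]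
    have hC₁le : C₁ ≤ 2 * t * a ^ θ := by
      have h1 : C₁ * a ^ (1 - θ) ≤ 2 * t * a ^ θ * a ^ (1 - θ) := by
        calc C₁ * a ^ (1 - θ) ≤ 2 * t * a := hchain
          _ = 2 * t * a ^ θ * a ^ (1 - θ) := by
              conv_lhs => rw [hsplit]
              ring
      exact le_of_mul_le_mul_right h1 hane
    have haθ : C₁ / (2 * t) ≤ a ^ θ := by
      rw [div_le_iff₀ (by positivity)]
      nlinarith [hC₁le]
    have hfin : ε₁ ≤ a := by
      rw [hε₁def]
      calc (C₁ / (2 * t)) ^ (1/θ) ≤ (a ^ θ) ^ (1/θ) :=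
            Real.rpow_le_rpow (by positivity) haθ (by positivity)
        _ = a := by
            rw [← Real.rpow_mul ha.le, mul_one_div, div_self hθ0.ne', Real.rpow_one]
    have : ε ≤ a := le_trans (min_le_right _ _) hfin
    linarith [habs]
  intro hacc
  rw [accPt_iff_nhds] at hacc
  obtain ⟨y, ⟨hyb, hyspec⟩, hyne⟩ := hacc (Metric.ball 0 ε) (Metric.ball_mem_nhds _ hεpos)
  exact hyne (key y hyspec (by simpa [Real.dist_eq] using hyb))

-- implication (2) → (4)
lemma imp24 (A : H →L[ℝ] H) (hA : ∀ x y : H, ⟪A x, y⟫ = ⟪x, A y⟫)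
    (h2 : ∃ ρ > (0:ℝ), ∀ u ∈ (LinearMap.ker (A : H →ₗ[ℝ] H))ᗮ, ρ * ‖u‖ ≤ ‖A u‖) :
    ∀ a : H, ∃ c > (0:ℝ), ∃ σ > (0:ℝ), ∀ u : H, ‖u - a‖ < σ →
      c * |(1/2 : ℝ) * ⟪A u, u⟫ - (1/2 : ℝ) * ⟪A a, a⟫| ^ ((1:ℝ)/2) ≤ ‖A u‖ := by
  obtain ⟨ρ, hρ, hbnd⟩ := h2
  -- global estimate: ρ * |⟪A u, u⟫| ≤ ‖A u‖ ^ 2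
  have hglob : ∀ u : H, ρ * |⟪A u, u⟫| ≤ ‖A u‖ ^ 2 := by
    intro u
    obtain ⟨v, hv, w, hw, rfl⟩ := (LinearMap.ker (A : H →ₗ[ℝ] H)).exists_add_mem_mem_orthogonal u
    have hAv : A v = 0 := LinearMap.mem_ker.mp hv
    have hAu : A (v + w) = A w := by rw [map_add, hAv, zero_add]
    have h1 : ⟪A (v + w), v + w⟫ = ⟪A w, w⟫ := by
      rw [hAu, inner_add_right]
      have : ⟪A w, v⟫ = 0 := by rw [hA w v, hAv, inner_zero_right]
      rw [this, zero_add]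
    rw [h1, hAu]
    have h2 : |⟪A w, w⟫| ≤ ‖A w‖ * ‖w‖ := abs_real_inner_le_norm _ _
    have h3 : ρ * ‖w‖ ≤ ‖A w‖ := hbnd w hw
    nlinarith [norm_nonneg (A w), norm_nonneg w, mul_nonneg (norm_nonneg (A w)) (norm_nonneg w)]
  intro a
  rcases eq_or_ne (A a) 0 with hAa | hAa
  · -- a is a critical point with Φ(a) = 0
    refine ⟨Real.sqrt (2 * ρ), Real.sqrt_pos.mpr (by linarith), 1, one_pos, ?_⟩
    intro u _
    have hΦa : ⟪A a, a⟫ = (0:ℝ) := by rw [hAa, inner_zero_left]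
    rw [hΦa]
    have hE : |(1/2 : ℝ) * ⟪A u, u⟫ - (1/2 : ℝ) * 0| = 1/2 * |⟪A u, u⟫| := by
      rw [mul_zero, sub_zero, abs_mul]; norm_num
    rw [hE]
    have hX0 : (0:ℝ) ≤ |⟪A u, u⟫| := abs_nonneg _
    have h4 : ρ * |⟪A u, u⟫| ≤ ‖A u‖ ^ 2 := hglob u
    have h6 : ((1/2 * |⟪A u, u⟫|) ^ ((1:ℝ)/2)) ^ 2 = 1/2 * |⟪A u, u⟫| := by
      rw [← Real.rpow_natCast ((1/2 * |⟪A u, u⟫|) ^ ((1:ℝ)/2)) 2,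
        ← Real.rpow_mul (by positivity)]
      norm_num
    have h5 : (Real.sqrt (2 * ρ) * (1/2 * |⟪A u, u⟫|) ^ ((1:ℝ)/2)) ^ 2 ≤ ‖A u‖ ^ 2 := by
      rw [mul_pow, Real.sq_sqrt (by linarith), h6]
      nlinarith
    have h7 : 0 ≤ Real.sqrt (2 * ρ) * (1/2 * |⟪A u, u⟫|) ^ ((1:ℝ)/2) :=
      mul_nonneg (Real.sqrt_nonneg _) (Real.rpow_nonneg (by positivity) _)
    nlinarith [norm_nonneg (A u)]
  · -- A a ≠ 0 : the gradient is bounded below near a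
    have hN : (0:ℝ) < ‖A a‖ := norm_pos_iff.mpr hAa
    set σ : ℝ := ‖A a‖ / (2 * (‖A‖ + 1)) with hσdef
    have hσpos : 0 < σ := by
      have : (0:ℝ) < ‖A‖ + 1 := by positivity
      positivity
    set M : ℝ := (1/2) * ‖A‖ * (‖a‖ + σ) ^ 2 + (1/2) * ‖A‖ * ‖a‖ ^ 2 + 1 with hMdef
    have hM1 : (1:ℝ) ≤ M := by
      have h1 : (0:ℝ) ≤ (1/2) * ‖A‖ * (‖a‖ + σ) ^ 2 := by positivity
      have h2 : (0:ℝ) ≤ (1/2) * ‖A‖ * ‖a‖ ^ 2 := by positivity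
      rw [hMdef]; linarith
    have hMpos : (0:ℝ) < M := by linarith
    refine ⟨(‖A a‖ / 2) / M, by positivity, σ, hσpos, ?_⟩
    intro u hu
    -- lower bound on ‖A u‖
    have hlow : ‖A a‖ / 2 ≤ ‖A u‖ := by
      have h1 : ‖A u - A a‖ ≤ ‖A‖ * ‖u - a‖ := by
        rw [← map_sub]; exact A.le_opNorm _
      have h2 : ‖A‖ * ‖u - a‖ ≤ ‖A‖ * σ := by
        apply mul_le_mul_of_nonneg_left hu.le (norm_nonneg _)
      have h3 : ‖A‖ * σ ≤ ‖A a‖ / 2 := by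
        rw [hσdef,
          show ‖A‖ * (‖A a‖ / (2 * (‖A‖ + 1))) = ‖A‖ * ‖A a‖ / (2 * (‖A‖ + 1)) from by ring,
          div_le_div_iff₀ (by positivity) (by norm_num : (0:ℝ) < 2)]
        nlinarith [norm_nonneg A, norm_nonneg (A a)]
      have h6 : ‖A a‖ - ‖A u‖ ≤ ‖A u - A a‖ := by
        have := norm_sub_norm_le (A a) (A u)
        rwa [norm_sub_rev] at this
      linarith
    -- upper bound on the potential difference
    have hup : |(1/2 : ℝ) * ⟪A u, u⟫ - (1/2 : ℝ) * ⟪A a, a⟫| ≤ M := by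
      have hnu : ‖u‖ ≤ ‖a‖ + σ := by
        have := norm_le_norm_add_norm_sub' u a  -- ‖u‖ ≤ ‖a‖ + ‖u - a‖
        have h7 := norm_sub_norm_le u a
        linarith [hu.le, h7]
      have h8 : |⟪A u, u⟫| ≤ ‖A‖ * (‖a‖ + σ) ^ 2 := by
        calc |⟪A u, u⟫| ≤ ‖A u‖ * ‖u‖ := abs_real_inner_le_norm _ _
          _ ≤ (‖A‖ * ‖u‖) * ‖u‖ := by
              apply mul_le_mul_of_nonneg_right (A.le_opNorm u) (norm_nonneg _)
          _ ≤ ‖A‖ * (‖a‖ + σ) ^ 2 := by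
              have h9 : (0:ℝ) ≤ ‖u‖ := norm_nonneg _
              have h10 : (0:ℝ) ≤ ‖A‖ := norm_nonneg _
              nlinarith [mul_le_mul hnu hnu h9 (le_trans h9 hnu), h10]
      have h11 : |⟪A a, a⟫| ≤ ‖A‖ * ‖a‖ ^ 2 := by
        calc |⟪A a, a⟫| ≤ ‖A a‖ * ‖a‖ := abs_real_inner_le_norm _ _
          _ ≤ (‖A‖ * ‖a‖) * ‖a‖ := by
              apply mul_le_mul_of_nonneg_right (A.le_opNorm a) (norm_nonneg _)
          _ = ‖A‖ * ‖a‖ ^ 2 := by ring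
      have h12 := abs_sub (((1:ℝ)/2) * ⟪A u, u⟫) (((1:ℝ)/2) * ⟪A a, a⟫)
      rw [hMdef]
      have h13 : |(1/2 : ℝ) * ⟪A u, u⟫| = (1/2) * |⟪A u, u⟫| := by
        rw [abs_mul]; norm_num
      have h14 : |(1/2 : ℝ) * ⟪A a, a⟫| = (1/2) * |⟪A a, a⟫| := by
        rw [abs_mul]; norm_num
      calc |(1/2 : ℝ) * ⟪A u, u⟫ - (1/2 : ℝ) * ⟪A a, a⟫|
          ≤ |(1/2 : ℝ) * ⟪A u, u⟫| + |(1/2 : ℝ) * ⟪A a, a⟫| := abs_sub _ _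
        _ ≤ (1/2) * ‖A‖ * (‖a‖ + σ) ^ 2 + (1/2) * ‖A‖ * ‖a‖ ^ 2 + 1 := by
            rw [h13, h14]; nlinarith [h8, h11]
    -- conclude
    have h15 : |(1/2 : ℝ) * ⟪A u, u⟫ - (1/2 : ℝ) * ⟪A a, a⟫| ^ ((1:ℝ)/2) ≤ M := by
      calc |(1/2 : ℝ) * ⟪A u, u⟫ - (1/2 : ℝ) * ⟪A a, a⟫| ^ ((1:ℝ)/2)
          ≤ M ^ ((1:ℝ)/2) := Real.rpow_le_rpow (abs_nonneg _) hup (by norm_num)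
        _ ≤ M ^ (1:ℝ) := Real.rpow_le_rpow_of_exponent_le hM1 (by norm_num)
        _ = M := Real.rpow_one M
    calc (‖A a‖ / 2) / M * |(1/2 : ℝ) * ⟪A u, u⟫ - (1/2 : ℝ) * ⟪A a, a⟫| ^ ((1:ℝ)/2)
        ≤ (‖A a‖ / 2) / M * M := by
          apply mul_le_mul_of_nonneg_left h15 (by positivity)
      _ = ‖A a‖ / 2 := by field_simp
      _ ≤ ‖A u‖ := hlow

-- implication (4) → (3)
lemma imp43 (A : H →L[ℝ] H)
    (h4 : ∀ a : H, ∃ c > (0:ℝ), ∃ σ > (0:ℝ), ∀ u : H, ‖u - a‖ < σ →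
      c * |(1/2 : ℝ) * ⟪A u, u⟫ - (1/2 : ℝ) * ⟪A a, a⟫| ^ ((1:ℝ)/2) ≤ ‖A u‖) :
    ∃ θ ∈ Set.Ioc (0:ℝ) (1/2), ∃ c > (0:ℝ), ∃ σ > (0:ℝ),
      ∀ u : H, ‖u‖ < σ → c * |(1/2 : ℝ) * ⟪A u, u⟫| ^ (1 - θ) ≤ ‖A u‖ := by
  obtain ⟨c, hc, σ, hσ, hh⟩ := h4 0
  refine ⟨1/2, ⟨by norm_num, le_refl _⟩, c, hc, σ, hσ, ?_⟩
  intro u hu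
  have h1 := hh u (by simpa using hu)
  have h2 : ⟪A (0:H), (0:H)⟫ = (0:ℝ) := by rw [map_zero, inner_zero_left]
  rw [h2, mul_zero, sub_zero] at h1
  have h3 : (1 : ℝ) - 1/2 = (1:ℝ)/2 := by norm_num
  rw [h3]
  exact h1

end Aux

/-- Theorem 10.1.2: characterization of bounded self-adjoint operators `A` whose
quadratic form `Φ(u) = ½⟨Au,u⟩` satisfies the Łojasiewicz gradient inequality. -/
theorem stmt_17 {H : Type*} [NormedAddCommGroup H] [InnerProductSpace ℝ H]
    [CompleteSpace H]
    (A : H →L[ℝ] H) (hA : ∀ x y : H, ⟪A x, y⟫ = ⟪x, A y⟫) :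
    List.TFAE [
      ¬ AccPt (0:ℝ) (Filter.principal (spectrum ℝ A)),
      ∃ ρ > (0:ℝ), ∀ u ∈ (LinearMap.ker (A : H →ₗ[ℝ] H))ᗮ, ρ * ‖u‖ ≤ ‖A u‖,
      ∃ θ ∈ Set.Ioc (0:ℝ) (1/2), ∃ c > (0:ℝ), ∃ σ > (0:ℝ),
        ∀ u : H, ‖u‖ < σ →
          c * |(1/2 : ℝ) * ⟪A u, u⟫| ^ (1 - θ) ≤ ‖A u‖,
      ∀ a : H, ∃ c > (0:ℝ), ∃ σ > (0:ℝ), ∀ u : H, ‖u - a‖ < σ →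
          c * |(1/2 : ℝ) * ⟪A u, u⟫ - (1/2 : ℝ) * ⟪A a, a⟫| ^ ((1:ℝ)/2) ≤ ‖A u‖ ] := by
  tfae_have 1 → 2 := imp12 A hA
  tfae_have 2 → 4 := imp24 A hA
  tfae_have 4 → 3 := imp43 A
  tfae_have 3 → 1 := imp31 A hA
  tfae_finish
end

section
/- Let H = ℓ²(ℕ) and let (ε_k)_{k∈ℕ} be a real sequence with ε_k > 0 for all k and ε_k → 0. Define F : H → ℝ by F(u) = Σ_{j=0}^∞ ε_j u_j². Then F satisfies no Łojasiewicz gradient inequality at the origin: for every θ ∈ (0,1] and every c > 0, σ > 0, there exists u ∈ H with 0 < ‖u‖ < σ and ‖∇F(u)‖ < c·|F(u)|^{1−θ}. -/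
open Set
open scoped ENNReal

local notation "⟪" x ", " y "⟫" => @inner ℝ _ _ x y

set_option maxHeartbeats 1000000 in
/-- Proposition 10.1.1: the quadratic functional `F(u) = Σ εⱼ uⱼ²` on `ℓ²(ℕ)`, with
`εⱼ > 0` and `εⱼ → 0`, satisfies no Łojasiewicz gradient inequality at the origin. -/
theorem stmt_18 (ε : ℕ → ℝ) (hε : ∀ k, 0 < ε k)
    (hε0 : Filter.Tendsto ε Filter.atTop (nhds 0))
    (F : lp (fun _ : ℕ => ℝ) 2 → ℝ)
    (hF : ∀ u : lp (fun _ : ℕ => ℝ) 2, F u = ∑' j : ℕ, ε j * (u j) ^ 2) :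
    ∀ θ ∈ Set.Ioc (0:ℝ) 1, ∀ c > (0:ℝ), ∀ σ > (0:ℝ),
      ∃ u : lp (fun _ : ℕ => ℝ) 2, 0 < ‖u‖ ∧ ‖u‖ < σ ∧
        ‖fderiv ℝ F u‖ < c * |F u| ^ (1 - θ) := by
  obtain ⟨C, hC⟩ := hε0.bddAbove_range
  set C' : ℝ := max C 1 with hC'def
  have hC'pos : (0:ℝ) < C' := lt_of_lt_of_le one_pos (le_max_right _ _)
  have hεle : ∀ k, ε k ≤ C' := fun k =>
    le_trans (hC ⟨k, rfl⟩) (le_max_left _ _)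
  have h2 : (0:ℝ) < (2:ℝ≥0∞).toReal := by norm_num
  have h2e : (2:ℝ≥0∞).toReal = (2:ℝ) := by norm_num
  have hb : ∀ (u : lp (fun _ : ℕ => ℝ) 2) (j : ℕ), ‖ε j * u j‖ ≤ C' * ‖u j‖ := by
    intro u j
    rw [norm_mul]
    gcongr
    rw [Real.norm_eq_abs, abs_of_pos (hε j)]
    exact hεle j
  have hmem : ∀ u : lp (fun _ : ℕ => ℝ) 2, Memℓp (fun j => ε j * u j) 2 := by
    intro u
    apply memℓp_gen
    have hs : Summable fun j => C' ^ (2:ℝ≥0∞).toReal * ‖u j‖ ^ (2:ℝ≥0∞).toReal :=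
      ((lp.memℓp u).summable h2).mul_left _
    refine Summable.of_nonneg_of_le
      (fun j => Real.rpow_nonneg (norm_nonneg _) _) (fun j => ?_) hs
    rw [← Real.mul_rpow hC'pos.le (norm_nonneg _)]
    exact Real.rpow_le_rpow (norm_nonneg _) (hb u j) h2.le
  let Tl : lp (fun _ : ℕ => ℝ) 2 →ₗ[ℝ] lp (fun _ : ℕ => ℝ) 2 :=
    { toFun := fun u => ⟨fun j => ε j * u j, hmem u⟩
      map_add' := by
        intro u v; apply lp.ext; funext j
        simp only [lp.coeFn_add, Pi.add_apply]
        show ε j * ((u : ℕ → ℝ) j + v j) = ε j * u j + ε j * v j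
        ring
      map_smul' := by
        intro a u; apply lp.ext; funext j
        simp only [lp.coeFn_smul, Pi.smul_apply, RingHom.id_apply]
        show ε j * (a • (u : ℕ → ℝ) j) = a • (ε j * u j)
        simp [smul_eq_mul]; ring }
  have hTapp : ∀ (u : lp (fun _ : ℕ => ℝ) 2) (j : ℕ), (Tl u) j = ε j * u j :=
    fun u j => rfl
  have hTnorm : ∀ u, ‖Tl u‖ ≤ C' * ‖u‖ := by
    intro u
    apply lp.norm_le_of_tsum_le h2 (mul_nonneg hC'pos.le (norm_nonneg u))
    have hsum1 : Summable fun j => ‖(Tl u) j‖ ^ (2:ℝ≥0∞).toReal :=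
      (hmem u).summable h2
    have hsum2 : Summable fun j => C' ^ (2:ℝ≥0∞).toReal * ‖u j‖ ^ (2:ℝ≥0∞).toReal :=
      ((lp.memℓp u).summable h2).mul_left _
    calc ∑' j, ‖(Tl u) j‖ ^ (2:ℝ≥0∞).toReal
        ≤ ∑' j, C' ^ (2:ℝ≥0∞).toReal * ‖u j‖ ^ (2:ℝ≥0∞).toReal := by
          refine Summable.tsum_le_tsum (fun j => ?_) hsum1 hsum2
          rw [hTapp, ← Real.mul_rpow hC'pos.le (norm_nonneg _)]
          exact Real.rpow_le_rpow (norm_nonneg _) (hb u j) h2.le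
      _ = C' ^ (2:ℝ≥0∞).toReal * ∑' j, ‖u j‖ ^ (2:ℝ≥0∞).toReal := tsum_mul_left
      _ = C' ^ (2:ℝ≥0∞).toReal * ‖u‖ ^ (2:ℝ≥0∞).toReal := by
          rw [lp.norm_rpow_eq_tsum h2]
      _ = (C' * ‖u‖) ^ (2:ℝ≥0∞).toReal :=
          (Real.mul_rpow hC'pos.le (norm_nonneg u)).symm
  let T : lp (fun _ : ℕ => ℝ) 2 →L[ℝ] lp (fun _ : ℕ => ℝ) 2 :=
    Tl.mkContinuous C' hTnorm
  have hTeq : ∀ u, T u = Tl u := fun u => rfl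
  have hinner : ∀ v w : lp (fun _ : ℕ => ℝ) 2,
      ⟪T v, w⟫ = ∑' j, ε j * (v j * w j) := by
    intro v w
    rw [lp.inner_eq_tsum]
    exact tsum_congr fun j => by
      rw [hTeq, hTapp]
      simp [RCLike.inner_apply]
      ring
  have hFeq : F = fun u => ⟪T u, u⟫ := by
    funext u
    rw [hF u, hinner]
    exact tsum_congr fun j => by ring
  have hderiv : ∀ u, HasFDerivAt F ((2:ℝ) • (innerSL ℝ (T u))) u := by
    intro u
    have h1 : HasFDerivAt (fun v => ⟪T v, v⟫)
        ((fderivInnerCLM ℝ (T u, u)).comp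
          (T.prod (ContinuousLinearMap.id ℝ _))) u :=
      (T.hasFDerivAt).inner ℝ (hasFDerivAt_id u)
    rw [hFeq]
    refine h1.congr_fderiv (Eq.symm ?_)
    ext v
    have hsymm : ⟪T v, u⟫ = ⟪T u, v⟫ := by
      rw [hinner, hinner]
      exact tsum_congr fun j => by ring
    simp only [ContinuousLinearMap.smul_apply, ContinuousLinearMap.comp_apply,
      ContinuousLinearMap.prod_apply, ContinuousLinearMap.id_apply,
      fderivInnerCLM_apply, innerSL_apply_apply]
    rw [hsymm]
    simp [smul_eq_mul]
    ring
  have hnorm : ∀ u, ‖fderiv ℝ F u‖ = 2 * ‖T u‖ := by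
    intro u
    rw [(hderiv u).fderiv, norm_smul]
    simp [innerSL_apply_norm]
  -- main argument
  intro θ hθ c hc σ hσ
  set t : ℝ := σ / 2 with htdef
  have ht : 0 < t := by positivity
  have htσ : t < σ := by rw [htdef]; linarith
  have hδ : 0 < c * t ^ ((2:ℝ) - 2 * θ) / (2 * t) := by
    have := Real.rpow_pos_of_pos ht ((2:ℝ) - 2 * θ)
    positivity
  have hεθ : Filter.Tendsto (fun k => ε k ^ θ) Filter.atTop (nhds 0) := by
    have h := hε0.rpow_const (p := θ) (Or.inr hθ.1.le)
    rwa [Real.zero_rpow hθ.1.ne'] at h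
  obtain ⟨k, hk⟩ := (hεθ.eventually_lt_const hδ).exists
  have hns : ‖lp.single (E := fun _ : ℕ => ℝ) 2 k t‖ = ‖t‖ :=
    lp.norm_single (E := fun _ : ℕ => ℝ) (by norm_num : (0:ℝ≥0∞) < 2) k t
  refine ⟨lp.single 2 k t, ?_, ?_, ?_⟩
  · rw [hns, Real.norm_eq_abs, abs_of_pos ht]; exact ht
  · rw [hns, Real.norm_eq_abs, abs_of_pos ht]; exact htσ
  · have hsk : ∀ j : ℕ, lp.single (E := fun _ : ℕ => ℝ) 2 k t j = if j = k then t else (0:ℝ) := by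
      intro j
      by_cases h : j = k
      · subst h; rw [lp.single_apply_self (E := fun _ : ℕ => ℝ), if_pos rfl]
      · rw [lp.single_apply_ne (E := fun _ : ℕ => ℝ) 2 k t h, if_neg h]
    have hTu : T (lp.single 2 k t) = lp.single 2 k (ε k * t) := by
      apply lp.ext; funext j
      rw [hTeq, hTapp, hsk j]
      by_cases h : j = k
      · subst h; simp [lp.single_apply_self (E := fun _ : ℕ => ℝ)]
      · simp [lp.single_apply_ne (E := fun _ : ℕ => ℝ) 2 k _ h, if_neg h, Pi.single_apply]
    have hFu : F (lp.single 2 k t) = ε k * t ^ 2 := by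
      rw [hF]
      rw [tsum_eq_single k]
      · rw [hsk k, if_pos rfl]
      · intro j hj
        rw [hsk j, if_neg hj]
        ring
    have hnormTu : ‖T (lp.single 2 k t)‖ = ε k * t := by
      have hns2 : ‖lp.single (E := fun _ : ℕ => ℝ) 2 k (ε k * t)‖ = ‖ε k * t‖ :=
        lp.norm_single (E := fun _ : ℕ => ℝ) (by norm_num : (0:ℝ≥0∞) < 2) k (ε k * t)
      rw [hTu, hns2, Real.norm_eq_abs, abs_of_pos (mul_pos (hε k) ht)]
    rw [hnorm, hnormTu, hFu, abs_of_pos (mul_pos (hε k) (by positivity))]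
    -- 2 * (ε k * t) < c * (ε k * t^2) ^ (1 - θ)
    have hεk := hε k
    have key : 2 * t * ε k ^ θ < c * t ^ ((2:ℝ) - 2 * θ) := by
      have h' := hk
      calc 2 * t * ε k ^ θ < 2 * t * (c * t ^ ((2:ℝ) - 2*θ) / (2 * t)) := by
            apply mul_lt_mul_of_pos_left h' (by positivity)
        _ = c * t ^ ((2:ℝ) - 2 * θ) := by field_simp
    have hsplit : ε k = ε k ^ θ * ε k ^ (1 - θ) := by
      rw [← Real.rpow_add hεk]
      simp
    have ht2 : (t ^ 2 : ℝ) = t ^ (2:ℝ) := by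
      rw [← Real.rpow_natCast t 2]; norm_num
    have hrhs : c * (ε k * t ^ 2) ^ (1 - θ)
        = c * t ^ ((2:ℝ) - 2 * θ) * ε k ^ (1 - θ) := by
      rw [ht2, Real.mul_rpow hεk.le (Real.rpow_nonneg ht.le _),
        ← Real.rpow_mul ht.le]
      ring_nf
    rw [hrhs]
    calc 2 * (ε k * t) = 2 * t * ε k ^ θ * ε k ^ (1 - θ) := by
          rw [mul_assoc, ← hsplit]; ring
      _ < c * t ^ ((2:ℝ) - 2 * θ) * ε k ^ (1 - θ) := by
          apply mul_lt_mul_of_pos_right key (Real.rpow_pos_of_pos hεk _)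
end

section
/- Let V be a real Hilbert space with topological dual V′, and let E : V → ℝ be twice continuously differentiable with E(0) = 0 and DE(0) = 0. Assume that the second derivative A := D²E(0), viewed as a bounded linear operator from V to V′ (v ↦ D²E(0)(v,·)), is a topological isomorphism. Then the Łojasiewicz gradient inequality holds near 0 with exponent 1/2: there exist σ > 0 and c > 0 such that ‖DE(u)‖_{V′} ≥ c·|E(u)|^{1/2} for all u ∈ V with ‖u‖_V < σ. -/
open Set

set_option maxHeartbeats 1000000

/-- Proposition 10.2.1: if `E` is `C²` with `E(0) = 0`, `DE(0) = 0` and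
`A = D²E(0) : V → V'` is an isomorphism, then the Łojasiewicz gradient inequality
holds near `0` with exponent `1/2`. -/
theorem stmt_19 {V : Type*} [NormedAddCommGroup V] [InnerProductSpace ℝ V]
    [CompleteSpace V]
    (E : V → ℝ) (hE : ContDiff ℝ 2 E) (hE0 : E 0 = 0)
    (hDE0 : fderiv ℝ E 0 = 0)
    (hA : Function.Bijective (fderiv ℝ (fderiv ℝ E) 0)) :
    ∃ σ > (0:ℝ), ∃ c > (0:ℝ), ∀ u : V, ‖u‖ < σ →
      c * |E u| ^ ((1:ℝ)/2) ≤ ‖fderiv ℝ E u‖ := by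
  set A := fderiv ℝ (fderiv ℝ E) 0 with hA_def
  have hdE : Differentiable ℝ E := hE.differentiable (by norm_num)
  have hE1 : ContDiff ℝ 1 (fderiv ℝ E) := hE.fderiv_right (by norm_num)
  have hdE1 : Differentiable ℝ (fderiv ℝ E) := hE1.differentiable one_ne_zero
  have hcont : Continuous (fderiv ℝ (fderiv ℝ E)) := hE1.continuous_fderiv one_ne_zero
  -- inverse bound from the open mapping theorem
  set e := ContinuousLinearEquiv.ofBijective A (LinearMap.ker_eq_bot.mpr hA.1)
    (LinearMap.range_eq_top.mpr hA.2) with he_def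
  set N : ℝ := ‖(e.symm : (V →L[ℝ] ℝ) →L[ℝ] V)‖ with hN_def
  have hN0 : 0 ≤ N := norm_nonneg _
  set m : ℝ := 1 / (N + 1) with hm_def
  have hm : 0 < m := by positivity
  have hmA : ∀ v : V, m * ‖v‖ ≤ ‖A v‖ := by
    intro v
    have h1 : ‖v‖ ≤ N * ‖A v‖ := by
      have : ‖e.symm (e v)‖ ≤ N * ‖e v‖ := (e.symm : (V →L[ℝ] ℝ) →L[ℝ] V).le_opNorm _
      rwa [e.symm_apply_apply] at this
    have h2 : 0 ≤ ‖A v‖ := norm_nonneg _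
    rw [hm_def, div_mul_eq_mul_div, div_le_iff₀ (by positivity)]
    nlinarith
  -- continuity of the second derivative at 0
  obtain ⟨δ, hδpos, hδ⟩ : ∃ δ > 0, ∀ x : V, ‖x‖ < δ →
      ‖fderiv ℝ (fderiv ℝ E) x - A‖ ≤ m / 2 := by
    obtain ⟨δ, hδpos, h⟩ := (Metric.continuousAt_iff (f := fderiv ℝ (fderiv ℝ E))).mp (hcont.continuousAt (x := 0)) (m / 2) (by positivity)
    refine ⟨δ, hδpos, fun x hx => ?_⟩
    have := h (x := x) (by simpa [dist_eq_norm] using hx)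
    refine (dist_eq_norm (fderiv ℝ (fderiv ℝ E) x) A).symm.trans_le ?_
    exact this.le
  -- first key estimate : ‖DE(u) - A u‖ ≤ (m/2)‖u‖ near 0
  have hg : ∀ x : V, HasFDerivAt (fun x => fderiv ℝ E x - A x)
      (fderiv ℝ (fderiv ℝ E) x - A) x :=
    fun x => (hdE1 x).hasFDerivAt.sub A.hasFDerivAt
  have key : ∀ u : V, ‖u‖ < δ → ‖fderiv ℝ E u - A u‖ ≤ m / 2 * ‖u‖ := by
    intro u hu
    have h := (convex_ball (0:V) δ).norm_image_sub_le_of_norm_fderiv_le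
      (f := fun x => fderiv ℝ E x - A x) (C := m / 2)
      (fun x _ => (hg x).differentiableAt)
      (fun x hx => by
        rw [(hg x).fderiv]
        exact hδ x (by simpa [Metric.mem_ball, dist_eq_norm] using hx))
      (Metric.mem_ball_self hδpos)
      (by simpa [Metric.mem_ball, dist_eq_norm] using hu)
    simpa [hDE0] using h
  -- second key estimate : |E u| ≤ (‖A‖ + m/2) ‖u‖²
  have keyE : ∀ u : V, ‖u‖ < δ → |E u| ≤ (‖A‖ + m / 2) * ‖u‖ ^ 2 := by
    intro u hu
    have h := (convex_closedBall (0:V) ‖u‖).norm_image_sub_le_of_norm_fderiv_le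
      (f := E) (C := (‖A‖ + m / 2) * ‖u‖)
      (fun x _ => hdE x)
      (fun x hx => by
        have hxu : ‖x‖ ≤ ‖u‖ := by
          simpa [Metric.mem_closedBall, dist_eq_norm] using hx
        have hxδ : ‖x‖ < δ := lt_of_le_of_lt hxu hu
        have h1 : ‖fderiv ℝ E x‖ ≤ ‖A x‖ + ‖fderiv ℝ E x - A x‖ := by
          have := norm_add_le (A x) (fderiv ℝ E x - A x)
          simpa using this
        have h2 : ‖A x‖ ≤ ‖A‖ * ‖x‖ := A.le_opNorm x
        have h3 := key x hxδ
        have hA0 : 0 ≤ ‖A‖ := norm_nonneg A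
        nlinarith [norm_nonneg x])
      (Metric.mem_closedBall_self (norm_nonneg u))
      (show u ∈ Metric.closedBall (0:V) ‖u‖ by
        simp [Metric.mem_closedBall, dist_zero_right])
    rw [hE0] at h
    simp only [sub_zero] at h
    calc |E u| = ‖E u‖ := rfl
      _ ≤ (‖A‖ + m / 2) * ‖u‖ * ‖u‖ := h
      _ = (‖A‖ + m / 2) * ‖u‖ ^ 2 := by ring
  -- conclusion
  have hK : (0:ℝ) < ‖A‖ + m / 2 := by have := norm_nonneg A; linarith
  have hsK : (0:ℝ) < Real.sqrt (‖A‖ + m / 2) := Real.sqrt_pos.mpr hK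
  refine ⟨δ, hδpos, (m / 2) / Real.sqrt (‖A‖ + m / 2), by positivity, fun u hu => ?_⟩
  have h1 : m / 2 * ‖u‖ ≤ ‖fderiv ℝ E u‖ := by
    have ha := hmA u
    have hb := key u hu
    have hc : ‖A u‖ - ‖fderiv ℝ E u‖ ≤ ‖A u - fderiv ℝ E u‖ := norm_sub_norm_le _ _
    rw [norm_sub_rev] at hc
    linarith
  have h2 : |E u| ^ ((1:ℝ)/2) ≤ Real.sqrt (‖A‖ + m / 2) * ‖u‖ := by
    rw [← Real.sqrt_eq_rpow]
    calc Real.sqrt |E u| ≤ Real.sqrt ((‖A‖ + m / 2) * ‖u‖ ^ 2) :=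
          Real.sqrt_le_sqrt (keyE u hu)
      _ = Real.sqrt (‖A‖ + m / 2) * Real.sqrt (‖u‖ ^ 2) := Real.sqrt_mul hK.le _
      _ = Real.sqrt (‖A‖ + m / 2) * ‖u‖ := by rw [Real.sqrt_sq (norm_nonneg u)]
  calc (m / 2) / Real.sqrt (‖A‖ + m / 2) * |E u| ^ ((1:ℝ)/2)
      ≤ (m / 2) / Real.sqrt (‖A‖ + m / 2) * (Real.sqrt (‖A‖ + m / 2) * ‖u‖) := by
        apply mul_le_mul_of_nonneg_left h2 (by positivity)
    _ = (m / 2) / Real.sqrt (‖A‖ + m / 2) * Real.sqrt (‖A‖ + m / 2) * ‖u‖ := by ring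
    _ = m / 2 * ‖u‖ := by rw [div_mul_cancel₀ _ hsK.ne']
    _ ≤ ‖fderiv ℝ E u‖ := h1
end
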